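/- Let B_W ∈ {0,1}^{p×p} and B_V ∈ {0,1}^{p×m} be binary matrices and K ∈ ℝ^{(n−p)×p}. For each i ∈ {1,…,p} with e_i^T·A12 ≠ 0, fix an orthogonal Q_i ∈ ℝ^{(n−p)×(n−p)} with e_i^T·A12·Q_i^T = ‖e_i^T·A12‖·e_{n−p}^T and an integer 1 ≤ n_i ≤ n−p. Assume for each i ∈ {1,…,p}: (i) (A11 − A12·K)_{ij} = 0 whenever (B_W)_{ij} = 0, for all j; (ii) (B1)_{ik} = 0 whenever (B_V)_{ik} = 0, for all k; and, whenever e_i^T·A12 ≠ 0: (iii) [0, I_{n_i}]·Q_i·A_K·e_j = 0 whenever (B_W)_{ij} = 0; (iv) [0, I_{n_i}]·Q_i·(K·B1 + B2)·e_k = 0 whenever (B_V)_{ik} = 0; (v) [0, I_{n_i}]·Q_i·(A22 + K·A12)·Q_i^T·[I_{n−p−n_i}; 0] = 0; (vi) the matrix [0, I_{n_i}]·Q_i·(A22 + K·A12)·Q_i^T·[0, I_{n_i}]^T ∈ ℝ^{n_i×n_i} is Hurwitz. Then every entry of W and of V is stable, and for all i, j, k: (B_W)_{ij} = 0 implies W_{ij}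 = 0 in F, and (B_V)_{ik} = 0 implies V_{ik} = 0 in F. -/

import Mathlib

/-! For a row `i` with `e_iᵀ A12 ≠ 0`, the orthogonal change of coordinates `Q_i` rewrites
`A12 (λI - N)⁻¹ X` (with `N = A22 + K A12`) as `(A12 Q_iᵀ) (λI - Q_i N Q_iᵀ)⁻¹ (Q_i X)`.
Row `i` of `A12 Q_iᵀ` vanishes on the first block and `Q_i N Q_iᵀ` is block upper triangular
by (v), so only the lower-right block `(λI - P₂₂)⁻¹` of the inverse and the last `n_i` rows of
`Q_i X` enter row `i`. The entries of `(λI - P₂₂)⁻¹` are `adj / charpoly` of the Hurwitz matrix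
`P₂₂`, hence stable, and stable rational functions are closed under sums and products; the
vanishing of those last rows, (iii) and (iv), gives the sparsity patterns. Rows with
`e_iᵀ A12 = 0` reduce to the real constants `A11 - A12 K` and `B1`, governed by (i) and (ii). -/

open Matrix Polynomial

noncomputable section

/-- The field of real rational functions. -/
abbrev FF : Type := RatFunc ℝ

/-- The rational function `λ` (the image of the polynomial indeterminate `X`). -/
noncomputable def lam : FF := RatFunc.X

/-- Entrywise embedding of a real matrix into matrices over `FF`. -/
noncomputable def mapF {k l : Type} (M : Matrix k l ℝ) : Matrix k l FF :=
  M.map (algebraMap ℝ FF)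

/-- The pencil `λ I - M` over `FF`, for a real square matrix `M`. -/
noncomputable def lamI {k : Type} [Fintype k] [DecidableEq k] (M : Matrix k k ℝ) :
    Matrix k k FF := lam • (1 : Matrix k k FF) - mapF M

/-- Entrywise complexification of a real matrix. -/
def mapC {k l : Type} (M : Matrix k l ℝ) : Matrix k l ℂ :=
  M.map (algebraMap ℝ ℂ)

/-- A real rational function is stable if every complex root of its reduced denominator
has real part `< 0`. -/
def StableF (f : RatFunc ℝ) : Prop :=
  ∀ z : ℂ, ((f.denom).map (algebraMap ℝ ℂ)).IsRoot z → z.re < 0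

/-- A real square matrix is Hurwitz if all roots of its characteristic polynomial
have real part `< 0`. -/
def IsHurwitz {k : Type} [Fintype k] [DecidableEq k] (M : Matrix k k ℝ) : Prop :=
  ∀ z : ℂ, ((M.charpoly).map (algebraMap ℝ ℂ)).IsRoot z → z.re < 0

/-- `A_K := K A11 - K A12 K + A21 - A22 K`. -/
noncomputable def AKmat {p r : ℕ} (A11 : Matrix (Fin p) (Fin p) ℝ)
    (A12 : Matrix (Fin p) (Fin r) ℝ) (A21 : Matrix (Fin r) (Fin p) ℝ)
    (A22 : Matrix (Fin r) (Fin r) ℝ) (K : Matrix (Fin r) (Fin p) ℝ) :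
    Matrix (Fin r) (Fin p) ℝ :=
  K * A11 - K * A12 * K + A21 - A22 * K

/-- The `W` member of the SRTR pair obtained from `K`. -/
noncomputable def srtrW {p r : ℕ} (A11 : Matrix (Fin p) (Fin p) ℝ)
    (A12 : Matrix (Fin p) (Fin r) ℝ) (A21 : Matrix (Fin r) (Fin p) ℝ)
    (A22 : Matrix (Fin r) (Fin r) ℝ) (K : Matrix (Fin r) (Fin p) ℝ) :
    Matrix (Fin p) (Fin p) FF :=
  mapF (A11 - A12 * K) +
    mapF A12 * (lamI (A22 + K * A12))⁻¹ * mapF (AKmat A11 A12 A21 A22 K)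

/-- The `V` member of the SRTR pair obtained from `K`. -/
noncomputable def srtrV {p r m : ℕ} (A12 : Matrix (Fin p) (Fin r) ℝ)
    (A22 : Matrix (Fin r) (Fin r) ℝ) (B1 : Matrix (Fin p) (Fin m) ℝ)
    (B2 : Matrix (Fin r) (Fin m) ℝ) (K : Matrix (Fin r) (Fin p) ℝ) :
    Matrix (Fin p) (Fin m) FF :=
  mapF B1 + mapF A12 * (lamI (A22 + K * A12))⁻¹ * mapF (K * B1 + B2)

/-- The plant transfer function `G = [I_p 0] (λ I_n - A)⁻¹ B`. -/
noncomputable def plantG {p r m : ℕ} (A11 : Matrix (Fin p) (Fin p) ℝ)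
    (A12 : Matrix (Fin p) (Fin r) ℝ) (A21 : Matrix (Fin r) (Fin p) ℝ)
    (A22 : Matrix (Fin r) (Fin r) ℝ) (B1 : Matrix (Fin p) (Fin m) ℝ)
    (B2 : Matrix (Fin r) (Fin m) ℝ) : Matrix (Fin p) (Fin m) FF :=
  fromCols (1 : Matrix (Fin p) (Fin p) FF) (0 : Matrix (Fin p) (Fin r) FF) *
    (lamI (fromBlocks A11 A12 A21 A22))⁻¹ * mapF (fromRows B1 B2)

/-- `(A12, A22)` is observable: `[A22 - μ I ; A12]` has full column rank for all `μ : ℂ`. -/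
def ObsPair {p r : ℕ} (A12 : Matrix (Fin p) (Fin r) ℝ)
    (A22 : Matrix (Fin r) (Fin r) ℝ) : Prop :=
  ∀ μ : ℂ, (fromRows (mapC A22 - μ • (1 : Matrix (Fin r) (Fin r) ℂ)) (mapC A12)).rank = r

/-- `(A, B)` is controllable: `[A - μ I, B]` has full row rank for all `μ : ℂ`. -/
def CtrbPair {p r m : ℕ} (A : Matrix (Fin p ⊕ Fin r) (Fin p ⊕ Fin r) ℝ)
    (B : Matrix (Fin p ⊕ Fin r) (Fin m) ℝ) : Prop :=
  ∀ μ : ℂ, (fromCols (mapC A - μ • (1 : Matrix (Fin p ⊕ Fin r) (Fin p ⊕ Fin r) ℂ))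
    (mapC B)).rank = p + r

-- `StableF f` unfolds to `IsHurwitzPoly f.denom` and `IsHurwitz M` to `IsHurwitzPoly M.charpoly`.
def IsHurwitzPoly (d : ℝ[X]) : Prop :=
  ∀ z : ℂ, (d.map (algebraMap ℝ ℂ)).IsRoot z → z.re < 0

theorem IsHurwitzPoly.of_dvd {d e : ℝ[X]} (hde : d ∣ e) (he : IsHurwitzPoly e) :
    IsHurwitzPoly d := by
  obtain ⟨w, rfl⟩ := hde
  intro z hz
  apply he z
  rw [IsRoot, Polynomial.map_mul, eval_mul, hz.eq_zero, zero_mul]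

theorem IsHurwitzPoly.mul {d e : ℝ[X]} (hd : IsHurwitzPoly d) (he : IsHurwitzPoly e) :
    IsHurwitzPoly (d * e) := by
  intro z hz
  rw [IsRoot, Polynomial.map_mul, eval_mul, mul_eq_zero] at hz
  exact hz.elim (hd z) (he z)

theorem stableF_div {q d : ℝ[X]} (hd0 : d ≠ 0) (hd : IsHurwitzPoly d) :
    StableF (algebraMap ℝ[X] FF q / algebraMap ℝ[X] FF d) :=
  hd.of_dvd ((RatFunc.denom_dvd hd0).2 ⟨q, rfl⟩)

theorem stableF_algebraMap (a : ℝ) : StableF (algebraMap ℝ FF a) := by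
  intro z hz
  rw [IsScalarTower.algebraMap_apply ℝ ℝ[X] FF, RatFunc.denom_algebraMap] at hz
  simp at hz

theorem stableF_zero : StableF 0 := by
  simpa using stableF_algebraMap 0

theorem StableF.add {f g : FF} (hf : StableF f) (hg : StableF g) : StableF (f + g) := by
  have hfg : f + g = algebraMap ℝ[X] FF (f.num * g.denom + g.num * f.denom) /
      algebraMap ℝ[X] FF (f.denom * g.denom) := by
    conv_lhs => rw [← f.num_div_denom, ← g.num_div_denom]
    rw [div_add_div _ _ (RatFunc.algebraMap_ne_zero f.denom_ne_zero)
      (RatFunc.algebraMap_ne_zero g.denom_ne_zero)]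
    simp only [map_add, map_mul]
    ring
  rw [hfg]
  exact stableF_div (mul_ne_zero f.denom_ne_zero g.denom_ne_zero) (IsHurwitzPoly.mul hf hg)

theorem StableF.mul {f g : FF} (hf : StableF f) (hg : StableF g) : StableF (f * g) := by
  have hfg : f * g = algebraMap ℝ[X] FF (f.num * g.num) /
      algebraMap ℝ[X] FF (f.denom * g.denom) := by
    conv_lhs => rw [← f.num_div_denom, ← g.num_div_denom]
    rw [div_mul_div_comm, map_mul, map_mul]
  rw [hfg]
  exact stableF_div (mul_ne_zero f.denom_ne_zero g.denom_ne_zero) (IsHurwitzPoly.mul hf hg)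

theorem StableF.sum {ι : Type*} (s : Finset ι) {f : ι → FF} (hf : ∀ i ∈ s, StableF (f i)) :
    StableF (∑ i ∈ s, f i) :=
  Finset.sum_induction f StableF (fun _ _ => StableF.add) stableF_zero hf

theorem lamI_eq_map {k : Type} [Fintype k] [DecidableEq k] (M : Matrix k k ℝ) :
    lamI M = (charmatrix M).map (algebraMap ℝ[X] FF) := by
  ext i j
  by_cases h : i = j
  · subst h
    simp [lamI, charmatrix_apply_eq, mapF, lam, Matrix.smul_apply, RatFunc.algebraMap_X]
  · simp [lamI, charmatrix_apply_ne _ _ _ h, mapF, Matrix.smul_apply, Matrix.one_apply_ne h]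

theorem det_lamI {k : Type} [Fintype k] [DecidableEq k] (M : Matrix k k ℝ) :
    (lamI M).det = algebraMap ℝ[X] FF M.charpoly := by
  rw [lamI_eq_map, ← RingHom.mapMatrix_apply, ← RingHom.map_det]
  rfl

theorem isUnit_det_lamI {k : Type} [Fintype k] [DecidableEq k] (M : Matrix k k ℝ) :
    IsUnit (lamI M).det := by
  rw [det_lamI, isUnit_iff_ne_zero]
  exact RatFunc.algebraMap_ne_zero M.charpoly_monic.ne_zero

theorem lamI_inv_apply {k : Type} [Fintype k] [DecidableEq k] (M : Matrix k k ℝ) (i j : k) :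
    (lamI M)⁻¹ i j =
      algebraMap ℝ[X] FF ((charmatrix M).adjugate i j) / algebraMap ℝ[X] FF M.charpoly := by
  rw [Matrix.inv_def, det_lamI, lamI_eq_map, Ring.inverse_eq_inv, Matrix.smul_apply,
    ← RingHom.mapMatrix_apply, ← RingHom.map_adjugate, RingHom.mapMatrix_apply,
    Matrix.map_apply, smul_eq_mul, inv_mul_eq_div]

theorem stableF_lamI_inv_apply {k : Type} [Fintype k] [DecidableEq k] {M : Matrix k k ℝ}
    (hM : IsHurwitz M) (i j : k) : StableF ((lamI M)⁻¹ i j) := by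
  rw [lamI_inv_apply]
  exact stableF_div M.charpoly_monic.ne_zero hM

theorem stableF_mapF_mul_mul_apply {ι σ τ κ : Type} [Fintype σ] [Fintype τ]
    (X : Matrix ι σ ℝ) {M : Matrix σ τ FF} (Y : Matrix τ κ ℝ) (hM : ∀ a b, StableF (M a b))
    (i : ι) (j : κ) : StableF ((mapF X * M * mapF Y) i j) :=
  StableF.sum _ fun b _ => (StableF.sum _ fun a _ =>
    (stableF_algebraMap _).mul (hM a b)).mul (stableF_algebraMap _)

theorem mapF_mul {k l o : Type} [Fintype l] (A : Matrix k l ℝ) (B : Matrix l o ℝ) :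
    mapF (A * B) = mapF A * mapF B := Matrix.map_mul

theorem lamI_inv_eq_of_orthogonal {k l : Type} [Fintype k] [DecidableEq k] [Fintype l]
    [DecidableEq l] (N : Matrix l l ℝ) {Q : Matrix k l ℝ} (hQ : Qᵀ * Q = 1) :
    (lamI N)⁻¹ = mapF Qᵀ * (lamI (Q * N * Qᵀ))⁻¹ * mapF Q := by
  apply inv_eq_right_inv
  have hQN : Qᵀ * (Q * N * Qᵀ) = N * Qᵀ := by
    rw [← Matrix.mul_assoc, ← Matrix.mul_assoc, hQ, Matrix.one_mul]
  have hcomm : lamI N * mapF Qᵀ = mapF Qᵀ * lamI (Q * N * Qᵀ) := by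
    simp only [lamI, Matrix.sub_mul, Matrix.mul_sub, Matrix.smul_mul, Matrix.mul_smul,
      Matrix.one_mul, Matrix.mul_one, ← mapF_mul, hQN]
  rw [← Matrix.mul_assoc, ← Matrix.mul_assoc, hcomm, Matrix.mul_assoc (mapF Qᵀ),
    Matrix.mul_nonsing_inv _ (isUnit_det_lamI _), Matrix.mul_one, ← mapF_mul, hQ]
  exact Matrix.map_one _ (map_zero _) (map_one _)

section BlockTriangular

variable {σ τ : Type} [Fintype σ] [DecidableEq σ] [Fintype τ] [DecidableEq τ]

theorem lamI_eq_fromBlocks {P : Matrix (σ ⊕ τ) (σ ⊕ τ) ℝ} (hP : P.toBlocks₂₁ = 0) :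
    lamI P = fromBlocks (lamI P.toBlocks₁₁) (-mapF P.toBlocks₁₂) 0 (lamI P.toBlocks₂₂) := by
  have hP' : ∀ a b, P (Sum.inr a) (Sum.inl b) = 0 := fun a b => congrFun (congrFun hP a) b
  ext (i | i) (j | j) <;>
    simp [lamI, mapF, Matrix.smul_apply, Matrix.one_apply, Matrix.toBlocks₁₁,
      Matrix.toBlocks₁₂, Matrix.toBlocks₂₂, hP']

theorem lamI_inv_eq_fromBlocks {P : Matrix (σ ⊕ τ) (σ ⊕ τ) ℝ} (hP : P.toBlocks₂₁ = 0) :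
    (lamI P)⁻¹ = fromBlocks (lamI P.toBlocks₁₁)⁻¹
      (-((lamI P.toBlocks₁₁)⁻¹ * -mapF P.toBlocks₁₂ * (lamI P.toBlocks₂₂)⁻¹)) 0
      (lamI P.toBlocks₂₂)⁻¹ := by
  rw [lamI_eq_fromBlocks hP, inv_fromBlocks_zero₂₁_of_isUnit_iff]
  exact iff_of_true ((isUnit_iff_isUnit_det _).2 (isUnit_det_lamI _))
    ((isUnit_iff_isUnit_det _).2 (isUnit_det_lamI _))

theorem mapF_mul_lamI_inv_mul_apply_of_toBlocks₂₁_eq_zero {ι κ : Type}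
    {P : Matrix (σ ⊕ τ) (σ ⊕ τ) ℝ} (hP : P.toBlocks₂₁ = 0) (L : Matrix ι (σ ⊕ τ) ℝ)
    (R : Matrix (σ ⊕ τ) κ ℝ) {i : ι} (hL : ∀ a, L i (Sum.inl a) = 0) (j : κ) :
    (mapF L * (lamI P)⁻¹ * mapF R) i j =
      (mapF L.toCols₂ * (lamI P.toBlocks₂₂)⁻¹ * mapF R.toRows₂) i j := by
  rw [lamI_inv_eq_fromBlocks hP]
  simp [Matrix.mul_apply, Fintype.sum_sum_type, mapF, hL]

end BlockTriangular

theorem mapF_mul_mul_apply_eq_zero_of_row {ι κ n : Type} [Fintype n] {M : Matrix n n FF}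
    (A : Matrix ι n ℝ) (C : Matrix n κ ℝ) {i : ι} (hA : (fun j => A i j) = 0) (j : κ) :
    (mapF A * M * mapF C) i j = 0 := by
  simp [Matrix.mul_apply, mapF, fun a => congrFun hA a]

theorem mul_mapF_apply_eq_zero_of_col {ι κ n : Type} [Fintype n] (M : Matrix ι n FF)
    {C : Matrix n κ ℝ} {j : κ} (hC : ∀ a, C a j = 0) (i : ι) : (M * mapF C) i j = 0 := by
  simp [Matrix.mul_apply, mapF, hC]

theorem mapF_mul_lamI_inv_mul_apply_eq_of_orthogonal {ι κ n σ τ : Type} [Fintype n]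
    [DecidableEq n] [Fintype σ] [DecidableEq σ] [Fintype τ] [DecidableEq τ]
    (A : Matrix ι n ℝ) (N : Matrix n n ℝ) (C : Matrix n κ ℝ) {Q : Matrix (σ ⊕ τ) n ℝ} (hQ : Qᵀ * Q = 1)
    (hP : (Q * N * Qᵀ).toBlocks₂₁ = 0) {i : ι} (hA : ∀ a, (A * Qᵀ) i (Sum.inl a) = 0)
    (j : κ) :
    (mapF A * (lamI N)⁻¹ * mapF C) i j =
      (mapF (A * Qᵀ).toCols₂ * (lamI (Q * N * Qᵀ).toBlocks₂₂)⁻¹ * mapF (Q * C).toRows₂) i j := by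
  have hconj : mapF A * (lamI N)⁻¹ * mapF C =
      mapF (A * Qᵀ) * (lamI (Q * N * Qᵀ))⁻¹ * mapF (Q * C) := by
    simp only [lamI_inv_eq_of_orthogonal N hQ, mapF_mul, Matrix.mul_assoc]
  rw [hconj, mapF_mul_lamI_inv_mul_apply_of_toBlocks₂₁_eq_zero hP _ _ hA]

theorem stableF_and_eq_zero_of_adapted_frames {ι κ n : Type} [Fintype n] [DecidableEq n]
    {σ τ : ι → Type} [∀ i, Fintype (σ i)] [∀ i, DecidableEq (σ i)] [∀ i, Fintype (τ i)]
    [∀ i, DecidableEq (τ i)] (A : Matrix ι n ℝ) (N : Matrix n n ℝ) (D : Matrix ι κ ℝ)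
    (C : Matrix n κ ℝ) (pattern : Matrix ι κ ℝ) (Q : (i : ι) → Matrix (σ i ⊕ τ i) n ℝ)
    (hQ : ∀ i, (fun j => A i j) ≠ 0 →
      (Q i)ᵀ * Q i = 1 ∧ ∀ a, (A * (Q i)ᵀ) i (Sum.inl a) = 0)
    (hD : ∀ i j, pattern i j = 0 → D i j = 0)
    (hC : ∀ i, (fun j => A i j) ≠ 0 → ∀ j, pattern i j = 0 →
      ∀ a, toRows₂ (Q i * C) a j = 0)
    (hP : ∀ i, (fun j => A i j) ≠ 0 → (Q i * N * (Q i)ᵀ).toBlocks₂₁ = 0)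
    (hHur : ∀ i, (fun j => A i j) ≠ 0 → IsHurwitz (Q i * N * (Q i)ᵀ).toBlocks₂₂) :
    (∀ i j, StableF ((mapF D + mapF A * (lamI N)⁻¹ * mapF C) i j)) ∧
    (∀ i j, pattern i j = 0 → (mapF D + mapF A * (lamI N)⁻¹ * mapF C) i j = 0) := by
  refine ⟨fun i j => ?_, fun i j hij => ?_⟩ <;> rw [Matrix.add_apply]
  · refine (stableF_algebraMap (D i j)).add ?_
    by_cases hi : (fun j => A i j) = 0
    · exact mapF_mul_mul_apply_eq_zero_of_row A C hi j ▸ stableF_zero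
    rw [mapF_mul_lamI_inv_mul_apply_eq_of_orthogonal A N C (hQ i hi).1 (hP i hi) (hQ i hi).2]
    exact stableF_mapF_mul_mul_apply _ _ (stableF_lamI_inv_apply (hHur i hi)) i j
  · have hD0 : mapF D i j = 0 := by simp [mapF, hD i j hij]
    rw [hD0, zero_add]
    by_cases hi : (fun j => A i j) = 0
    · exact mapF_mul_mul_apply_eq_zero_of_row A C hi j
    rw [mapF_mul_lamI_inv_mul_apply_eq_of_orthogonal A N C (hQ i hi).1 (hP i hi) (hQ i hi).2]
    exact mul_mapF_apply_eq_zero_of_col _ (hC i hi j hij) i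

theorem stmt_16_general (p r m : ℕ)
    (A11 : Matrix (Fin p) (Fin p) ℝ) (A12 : Matrix (Fin p) (Fin r) ℝ)
    (A21 : Matrix (Fin r) (Fin p) ℝ) (A22 : Matrix (Fin r) (Fin r) ℝ)
    (B1 : Matrix (Fin p) (Fin m) ℝ) (B2 : Matrix (Fin r) (Fin m) ℝ)
    (BW : Matrix (Fin p) (Fin p) ℝ) (BV : Matrix (Fin p) (Fin m) ℝ)
    (K : Matrix (Fin r) (Fin p) ℝ)
    (s t : Fin p → ℕ)
    (Q : (i : Fin p) → Matrix (Fin (s i) ⊕ Fin (t i)) (Fin r) ℝ)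
    (hQ : ∀ i : Fin p, (fun j : Fin r => A12 i j) ≠ 0 →
      (Q i * (Q i)ᵀ = 1 ∧ (Q i)ᵀ * Q i = 1 ∧ 0 < t i ∧ s i + t i = r ∧
        (∀ a : Fin (s i), (A12 * (Q i)ᵀ) i (Sum.inl a) = 0) ∧
        (∀ a : Fin (t i), (A12 * (Q i)ᵀ) i (Sum.inr a) =
          if (a : ℕ) + 1 = t i then Real.sqrt (∑ j : Fin r, A12 i j ^ 2) else 0)))
    (h1 : ∀ i j, BW i j = 0 → (A11 - A12 * K) i j = 0)
    (h2 : ∀ i k, BV i k = 0 → B1 i k = 0)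
    (h3 : ∀ i : Fin p, (fun j : Fin r => A12 i j) ≠ 0 → ∀ j, BW i j = 0 →
      ∀ a : Fin (t i), toRows₂ (Q i * AKmat A11 A12 A21 A22 K) a j = 0)
    (h4 : ∀ i : Fin p, (fun j : Fin r => A12 i j) ≠ 0 → ∀ k, BV i k = 0 →
      ∀ a : Fin (t i), toRows₂ (Q i * (K * B1 + B2)) a k = 0)
    (h5 : ∀ i : Fin p, (fun j : Fin r => A12 i j) ≠ 0 →
      (Q i * (A22 + K * A12) * (Q i)ᵀ).toBlocks₂₁ = 0)
    (h6 : ∀ i : Fin p, (fun j : Fin r => A12 i j) ≠ 0 →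
      IsHurwitz ((Q i * (A22 + K * A12) * (Q i)ᵀ).toBlocks₂₂)) :
    (∀ i j, StableF (srtrW A11 A12 A21 A22 K i j)) ∧
    (∀ i k, StableF (srtrV A12 A22 B1 B2 K i k)) ∧
    (∀ i j, BW i j = 0 → srtrW A11 A12 A21 A22 K i j = 0) ∧
    (∀ i k, BV i k = 0 → srtrV A12 A22 B1 B2 K i k = 0) := by
  have hframe : ∀ i, (fun j => A12 i j) ≠ 0 →
      (Q i)ᵀ * Q i = 1 ∧ ∀ a, (A12 * (Q i)ᵀ) i (Sum.inl a) = 0 :=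
    fun i hi => ⟨(hQ i hi).2.1, (hQ i hi).2.2.2.2.1⟩
  obtain ⟨hW, hW0⟩ := stableF_and_eq_zero_of_adapted_frames A12 (A22 + K * A12)
    (A11 - A12 * K) (AKmat A11 A12 A21 A22 K) BW Q hframe h1 h3 h5 h6
  obtain ⟨hV, hV0⟩ := stableF_and_eq_zero_of_adapted_frames A12 (A22 + K * A12)
    B1 (K * B1 + B2) BV Q hframe h2 h4 h5 h6
  exact ⟨hW, hV, hW0, hV0⟩

/-- under the structural conditions (i)-(vi), the SRTR pair `(W, V)`
obtained from `K` is stable and satisfies the sparsity patterns encoded by the binary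
matrices `B_W` and `B_V`. -/
theorem stmt_16 (p r m : ℕ) (hp : 0 < p) (hr : 0 < r) (hm : 0 < m)
    (A11 : Matrix (Fin p) (Fin p) ℝ) (A12 : Matrix (Fin p) (Fin r) ℝ)
    (A21 : Matrix (Fin r) (Fin p) ℝ) (A22 : Matrix (Fin r) (Fin r) ℝ)
    (B1 : Matrix (Fin p) (Fin m) ℝ) (B2 : Matrix (Fin r) (Fin m) ℝ)
    (BW : Matrix (Fin p) (Fin p) ℝ) (BV : Matrix (Fin p) (Fin m) ℝ)
    (hBW : ∀ i j, BW i j = 0 ∨ BW i j = 1) (hBV : ∀ i k, BV i k = 0 ∨ BV i k = 1)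
    (K : Matrix (Fin r) (Fin p) ℝ)
    (s t : Fin p → ℕ)
    (Q : (i : Fin p) → Matrix (Fin (s i) ⊕ Fin (t i)) (Fin r) ℝ)
    (hQ : ∀ i : Fin p, (fun j : Fin r => A12 i j) ≠ 0 →
      (Q i * (Q i)ᵀ = 1 ∧ (Q i)ᵀ * Q i = 1 ∧ 0 < t i ∧ s i + t i = r ∧
        (∀ a : Fin (s i), (A12 * (Q i)ᵀ) i (Sum.inl a) = 0) ∧
        (∀ a : Fin (t i), (A12 * (Q i)ᵀ) i (Sum.inr a) =
          if (a : ℕ) + 1 = t i then Real.sqrt (∑ j : Fin r, A12 i j ^ 2) else 0)))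
    (h1 : ∀ i j, BW i j = 0 → (A11 - A12 * K) i j = 0)
    (h2 : ∀ i k, BV i k = 0 → B1 i k = 0)
    (h3 : ∀ i : Fin p, (fun j : Fin r => A12 i j) ≠ 0 → ∀ j, BW i j = 0 →
      ∀ a : Fin (t i), toRows₂ (Q i * AKmat A11 A12 A21 A22 K) a j = 0)
    (h4 : ∀ i : Fin p, (fun j : Fin r => A12 i j) ≠ 0 → ∀ k, BV i k = 0 →
      ∀ a : Fin (t i), toRows₂ (Q i * (K * B1 + B2)) a k = 0)
    (h5 : ∀ i : Fin p, (fun j : Fin r => A12 i j) ≠ 0 →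
      (Q i * (A22 + K * A12) * (Q i)ᵀ).toBlocks₂₁ = 0)
    (h6 : ∀ i : Fin p, (fun j : Fin r => A12 i j) ≠ 0 →
      IsHurwitz ((Q i * (A22 + K * A12) * (Q i)ᵀ).toBlocks₂₂)) :
    (∀ i j, StableF (srtrW A11 A12 A21 A22 K i j)) ∧
    (∀ i k, StableF (srtrV A12 A22 B1 B2 K i k)) ∧
    (∀ i j, BW i j = 0 → srtrW A11 A12 A21 A22 K i j = 0) ∧
    (∀ i k, BV i k = 0 → srtrV A12 A22 B1 B2 K i k = 0) :=
  stmt_16_general p r m A11 A12 A21 A22 B1 B2 BW BV K s t Q hQ h1 h2 h3 h4 h5 h6
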